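/- If A is mixing and the masses ν^u_z(W^u_loc(z)) are uniformly comparable over z ∈ Σ_A (i.e., there is κ ≥ 1 with ν^u_z(W^u_loc(z))/ν^u_w(W^u_loc(w)) ≤ κ for all z,w), then for every cylinder U the probability measures Θ^m_{n,x} = Σ_{i=1}^{k_m} [ν^u_{σ^m x}(W^u_loc(y^i))/ν^u_{σ^m x}(σ^m(W^u_loc(x)))] δ_{y^i} satisfy inf_{n,m>M,x} Θ^m_{n,x}(U) > 0, i.e., the family is adapted to U. -/

import Mathlib

open MeasureTheory ENNReal

/-- The two-sided subshift of finite type determined by a 0-1 matrix `A`. -/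
def SigmaA (d : ℕ) (A : Matrix (Fin d) (Fin d) ℕ) : Type :=
  {x : ℤ → Fin d // ∀ n : ℤ, A (x n) (x (n + 1)) = 1}

instance (d : ℕ) (A : Matrix (Fin d) (Fin d) ℕ) : TopologicalSpace (SigmaA d A) :=
  instTopologicalSpaceSubtype

instance (d : ℕ) (A : Matrix (Fin d) (Fin d) ℕ) : MeasurableSpace (SigmaA d A) :=
  borel _

instance (d : ℕ) (A : Matrix (Fin d) (Fin d) ℕ) : BorelSpace (SigmaA d A) := ⟨rfl⟩

/-- The shift map on the two-sided subshift. -/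
def shiftMap (d : ℕ) (A : Matrix (Fin d) (Fin d) ℕ) : SigmaA d A → SigmaA d A :=
  fun x => ⟨fun n => x.val (n + 1), fun n => by simpa using x.property (n + 1)⟩

/-- The local unstable set `W^u_loc(x) = {y : y_n = x_n ∀ n ≤ 0}`. -/
def WuLoc (d : ℕ) (A : Matrix (Fin d) (Fin d) ℕ) (x : SigmaA d A) :
    Set (SigmaA d A) :=
  {y | ∀ n : ℤ, n ≤ 0 → y.val n = x.val n}

/-- The Marcus operator
`R_n h (x) = (1/ν^u_x(W^u_loc(x))) ∫_{W^u_loc(x)} h ∘ σ^n dν^u_x`. -/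
noncomputable def Rop (d : ℕ) (A : Matrix (Fin d) (Fin d) ℕ)
    (ν : SigmaA d A → Measure (SigmaA d A)) (n : ℕ)
    (h : SigmaA d A → ℝ) (x : SigmaA d A) : ℝ :=
  ((ν x) (WuLoc d A x)).toReal⁻¹ *
    ∫ y in WuLoc d A x, h ((shiftMap d A)^[n] y) ∂(ν x)

/-!
The set `σ^m(W^u_loc(x))` splits into the pieces `W^u_loc(y)` indexed by the pasts of its points,
that is, by the admissible words in the coordinates `-m+1, …, 0` that continue the past of `x`.
Since all entries of `A^M` are positive, the last `M` symbols of any such word can be rerouted so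
that the word ends in `a 0`; at most `d^M` words share a rerouted word, so at least a proportion
`d^{-M}` of the pieces have `0`-th symbol `a 0`. Choosing the future of each representative to
spell out `a` when its `0`-th symbol is `a 0` puts these representatives in the cylinder, and the
comparability of the masses turns the proportion of pieces into a proportion `≥ 1 / (d^M κ)` of
mass.
-/

def splice {α : Type*} (q : ℕ → α) (k : ℕ) (r : ℕ → α) : ℕ → α :=
  fun n => if n < k then q n else r (n - k)

section Splice

variable {α : Type*} {q r : ℕ → α} {k n : ℕ}

theorem splice_of_lt (h : n < k) : splice q k r n = q n := if_pos h

theorem splice_of_le (h : k ≤ n) : splice q k r n = r (n - k) := if_neg (by omega)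

theorem splice_zero (hqr : q k = r 0) : splice q k r 0 = q 0 := by
  rcases Nat.eq_zero_or_pos k with rfl | hk
  · exact (splice_of_le le_rfl).trans hqr.symm
  · exact splice_of_lt hk

theorem splice_chain {R : α → α → Prop} (hq : ∀ i < k, R (q i) (q (i + 1)))
    (hqr : q k = r 0) (hr : ∀ i, R (r i) (r (i + 1))) (i : ℕ) :
    R (splice q k r i) (splice q k r (i + 1)) := by
  rcases lt_trichotomy (i + 1) k with h | h | h
  · rw [splice_of_lt (by omega), splice_of_lt h]
    exact hq i (by omega)
  · rw [splice_of_lt (by omega), splice_of_le h.ge, h, Nat.sub_self, ← hqr, ← h]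
    exact hq i (by omega)
  · rw [splice_of_le (by omega), splice_of_le (by omega), show i + 1 - k = i - k + 1 by omega]
    exact hr _

end Splice

theorem Matrix.exists_path_of_pow_pos {ι : Type*} [Fintype ι] [DecidableEq ι]
    {B : Matrix ι ι ℕ} {k : ℕ} {s t : ι} (h : 0 < (B ^ k) s t) :
    ∃ q : ℕ → ι, q 0 = s ∧ q k = t ∧ ∀ i < k, 0 < B (q i) (q (i + 1)) := by
  induction k generalizing s with
  | zero =>
    rw [pow_zero, Matrix.one_apply] at h
    split_ifs at h with hst
    · exact ⟨fun _ => s, rfl, hst, by simp⟩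
    · exact absurd h (lt_irrefl 0)
  | succ k ih =>
    rw [pow_succ', Matrix.mul_apply] at h
    obtain ⟨r, -, hr⟩ := Finset.sum_pos_iff.1 h
    obtain ⟨hsr, hrt⟩ := CanonicallyOrderedAdd.mul_pos.1 hr
    obtain ⟨q, hq0, hqk, hq⟩ := ih hrt
    refine ⟨fun | 0 => s | i + 1 => q i, rfl, hqk, ?_⟩
    rintro (_ | i) hi
    · simpa [hq0] using hsr
    · exact hq i (by omega)

theorem inv_mul_le_sum_div_sum {ι : Type*} [Fintype ι] [Nonempty ι] {w : ι → ℝ}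
    (hw : ∀ i, 0 < w i) {κ : ℝ} (hcomp : ∀ i j, w i ≤ κ * w j) {s : Finset ι} {N : ℕ}
    (hs : Fintype.card ι ≤ s.card * N) :
    ((N : ℝ) * κ)⁻¹ ≤ (∑ i ∈ s, w i) / ∑ i, w i := by
  obtain ⟨j, -, hj⟩ := Finset.exists_min_image Finset.univ w Finset.univ_nonempty
  have hκ : 1 ≤ κ := le_of_mul_le_mul_right (by simpa using hcomp j j) (hw j)
  have hN : 0 < N := Nat.pos_of_ne_zero fun hN => by
    simp only [hN, mul_zero, Nat.le_zero, Fintype.card_eq_zero_iff] at hs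
    exact hs.false (Classical.arbitrary ι)
  have htotal : ∑ i, w i ≤ Fintype.card ι * (κ * w j) := by
    have := Finset.sum_le_card_nsmul Finset.univ w _ fun i _ => hcomp i j
    rwa [Finset.card_univ, nsmul_eq_mul] at this
  have hpart : s.card * w j ≤ ∑ i ∈ s, w i := by
    simpa using Finset.card_nsmul_le_sum _ _ _ fun i _ => hj i (Finset.mem_univ i)
  rw [le_div_iff₀ (Finset.sum_pos (fun i _ => hw i) Finset.univ_nonempty),
    inv_mul_le_iff₀ (by positivity)]
  have hwj := hw j
  calc ∑ i, w i ≤ Fintype.card ι * (κ * w j) := htotal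
    _ ≤ (s.card * N : ℕ) * (κ * w j) :=
      mul_le_mul_of_nonneg_right (by exact_mod_cast hs) (by positivity)
    _ = N * κ * (s.card * w j) := by push_cast; ring
    _ ≤ N * κ * ∑ i ∈ s, w i := by gcongr

namespace SigmaA

variable {d : ℕ} {A : Matrix (Fin d) (Fin d) ℕ}

theorem ext {x y : SigmaA d A} (h : ∀ n, x.val n = y.val n) : x = y :=
  Subtype.ext (funext h)

theorem shiftMap_iterate_val (m : ℕ) (y : SigmaA d A) (n : ℤ) :
    ((shiftMap d A)^[m] y).val n = y.val (n + m) := by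
  induction m generalizing y with
  | zero => simp
  | succ m ih =>
    rw [Function.iterate_succ_apply, ih]
    exact congrArg y.val (by push_cast; ring)

def past (z : SigmaA d A) : ℕ → Fin d := fun n => z.val (-n)

theorem past_chain (z : SigmaA d A) (n : ℕ) : A (past z (n + 1)) (past z n) = 1 := by
  simpa [past, show -((n : ℤ) + 1) + 1 = -n by ring] using z.property (-(n + 1))

theorem mem_WuLoc_iff {y z : SigmaA d A} : z ∈ WuLoc d A y ↔ past z = past y := by
  refine ⟨fun h => funext fun n => h _ (by omega), fun h n hn => ?_⟩
  have := congrFun h (-n).toNat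
  simp only [past] at this
  rwa [show -(((-n).toNat : ℕ) : ℤ) = n by omega] at this

def ofPastFuture (p r : ℕ → Fin d) (hp : ∀ n, A (p (n + 1)) (p n) = 1)
    (hr : ∀ n, A (r n) (r (n + 1)) = 1) (h0 : p 0 = r 0) : SigmaA d A :=
  ⟨fun n => if n ≤ 0 then p (-n).toNat else r n.toNat, fun n => by
    rcases lt_trichotomy n 0 with hn | rfl | hn
    · simpa [hn.le, show n + 1 ≤ 0 by omega,
        show (-n).toNat = (-(n + 1)).toNat + 1 by omega] using hp _
    · simpa [h0] using hr 0
    · simpa [show ¬n ≤ 0 by omega, show ¬n + 1 ≤ 0 by omega,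
        show (n + 1).toNat = n.toNat + 1 by omega] using hr n.toNat⟩

section OfPastFuture

variable {p r : ℕ → Fin d} {hp : ∀ n, A (p (n + 1)) (p n) = 1}
  {hr : ∀ n, A (r n) (r (n + 1)) = 1} {h0 : p 0 = r 0}

theorem past_ofPastFuture : past (ofPastFuture p r hp hr h0) = p :=
  funext fun n => by simp [past, ofPastFuture]

theorem ofPastFuture_val_natCast (n : ℕ) : (ofPastFuture p r hp hr h0).val n = r n := by
  rcases Nat.eq_zero_or_pos n with rfl | hn
  · simp [ofPastFuture, h0]
  · simp [ofPastFuture, hn.ne']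

end OfPastFuture

def imagePasts (x : SigmaA d A) (m : ℕ) : Set (ℕ → Fin d) :=
  {p | (∀ n, A (p (n + 1)) (p n) = 1) ∧ ∀ n, m ≤ n → p n = x.val (m - n)}

theorem mem_image_iterate_WuLoc_iff {x z : SigmaA d A} {m : ℕ} :
    z ∈ (shiftMap d A)^[m] '' WuLoc d A x ↔ past z ∈ imagePasts x m := by
  refine ⟨?_, fun h => ?_⟩
  · rintro ⟨u, hu, rfl⟩
    refine ⟨past_chain _, fun n hn => ?_⟩
    rw [past, shiftMap_iterate_val]
    exact (hu _ (by omega)).trans (congrArg x.val (by ring))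
  · have hz : ∀ n : ℕ, A (z.val (n - m)) (z.val ((n + 1 : ℕ) - m)) = 1 := fun n => by
      simpa [show (n : ℤ) - m + 1 = n + 1 - m by ring] using z.property (n - m)
    have h0 : past x 0 = z.val ((0 : ℕ) - m) := by
      simpa [past] using (h.2 m le_rfl).symm
    refine ⟨ofPastFuture (past x) (fun n => z.val (n - m)) (past_chain x) hz h0,
      mem_WuLoc_iff.2 past_ofPastFuture, ext fun n => ?_⟩
    rw [shiftMap_iterate_val]
    show (if n + m ≤ 0 then past x (-(n + m)).toNat else z.val (((n + m).toNat : ℕ) - m)) = _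
    split_ifs with hnm
    · have := h.2 (-n).toNat (by omega)
      simp only [past] at this ⊢
      rw [show -(((-(n + m)).toNat : ℕ) : ℤ) = m - (-n).toNat by omega, ← this]
      exact congrArg z.val (by omega)
    · exact congrArg z.val (by omega)

theorem finite_imagePasts (x : SigmaA d A) (m : ℕ) : (imagePasts x m).Finite := by
  refine Set.Finite.of_finite_image (f := fun p (j : Fin m) => p j) (Set.toFinite _) ?_
  intro p hp q hq hpq
  funext n
  by_cases hn : n < m
  · exact congrFun hpq ⟨n, hn⟩
  · rw [hp.2 n (by omega), hq.2 n (by omega)]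

instance (x : SigmaA d A) (m : ℕ) : Finite (imagePasts x m) := (finite_imagePasts x m).to_subtype

variable {M : ℕ} {x : SigmaA d A} {m : ℕ}

theorem exists_forward_chain (h01 : ∀ i j, A i j = 0 ∨ A i j = 1)
    (hM : ∀ i j, 0 < (A ^ M) i j) (x₀ : SigmaA d A) (s : Fin d) :
    ∃ r : ℕ → Fin d, r 0 = s ∧ ∀ n, A (r n) (r (n + 1)) = 1 := by
  obtain ⟨q, hq0, hqM, hq⟩ := Matrix.exists_path_of_pow_pos (hM s (x₀.val 0))
  have hqr : q M = x₀.val ((0 : ℕ) : ℤ) := hqM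
  exact ⟨splice q M fun n => x₀.val n, (splice_zero hqr).trans hq0,
    splice_chain (R := fun i j => A i j = 1) (fun i hi => (h01 _ _).resolve_left (hq i hi).ne')
      hqr fun n => by simpa using x₀.property n⟩

theorem exists_future (h01 : ∀ i j, A i j = 0 ∨ A i j = 1)
    (hM : ∀ i j, 0 < (A ^ M) i j) (x₀ : SigmaA d A) {l : ℕ} (a : Fin (l + 1) → Fin d)
    (ha : ∀ i : Fin l, A (a i.castSucc) (a i.succ) = 1) :
    ∃ F : Fin d → ℕ → Fin d, (∀ s, F s 0 = s) ∧ (∀ s n, A (F s n) (F s (n + 1)) = 1) ∧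
      ∀ i : Fin (l + 1), F (a 0) i = a i := by
  choose G hG0 hG using exists_forward_chain h01 hM x₀
  let w : ℕ → Fin d := fun n => a ⟨min n l, by omega⟩
  have hw : ∀ i < l, A (w i) (w (i + 1)) = 1 := fun i hi => by
    simpa [w, Fin.castSucc, Fin.succ, min_eq_left hi.le, min_eq_left (Nat.succ_le_of_lt hi)]
      using ha ⟨i, hi⟩
  have hwl : w l = G (a (Fin.last l)) 0 := by simp [w, hG0, Fin.last]
  let rA := splice w l (G (a (Fin.last l)))
  have hrA : ∀ i : Fin (l + 1), rA i = a i := by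
    intro i
    show splice w l _ i = a i
    rcases (Fin.is_le i).lt_or_eq with h | h
    · rw [splice_of_lt h]
      simp [w, min_eq_left h.le]
    · rw [splice_of_le h.ge, h, Nat.sub_self, ← hwl]
      simp [w, ← h]
  refine ⟨fun s => if s = a 0 then rA else G s, fun s => ?_, fun s => ?_,
    fun i => by simp [hrA]⟩
  · dsimp only
    split_ifs with h
    · simpa [h] using hrA 0
    · exact hG0 s
  · intro n
    dsimp only
    split_ifs
    · exact splice_chain (R := fun i j => A i j = 1) hw hwl (hG _) n
    · exact hG s n

def cylinder {l : ℕ} (a : Fin (l + 1) → Fin d) : Set (SigmaA d A) :=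
  {z | ∀ i : Fin (l + 1), z.val i = a i}

section PieceRep

variable (F : Fin d → ℕ → Fin d) (hF0 : ∀ s, F s 0 = s)
  (hF : ∀ s n, A (F s n) (F s (n + 1)) = 1)

/-- The paper's representative `yⁱ` of the piece of `σ^m(W^u_loc(x))` with past `p`. -/
def pieceRep (p : imagePasts x m) : SigmaA d A :=
  ofPastFuture p.1 (F (p.1 0)) p.2.1 (hF _) (hF0 _).symm

theorem past_pieceRep (p : imagePasts x m) : past (pieceRep F hF0 hF p) = p.1 :=
  past_ofPastFuture

theorem image_iterate_WuLoc_eq_iUnion :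
    (shiftMap d A)^[m] '' WuLoc d A x =
      ⋃ p : imagePasts x m, WuLoc d A (pieceRep F hF0 hF p) := by
  ext z
  simp only [Set.mem_iUnion, mem_WuLoc_iff, past_pieceRep, mem_image_iterate_WuLoc_iff]
  exact ⟨fun h => ⟨⟨_, h⟩, rfl⟩, fun ⟨p, hp⟩ => hp ▸ p.2⟩

theorem pairwise_disjoint_WuLoc_pieceRep :
    Pairwise fun p q : imagePasts x m =>
      Disjoint (WuLoc d A (pieceRep F hF0 hF p)) (WuLoc d A (pieceRep F hF0 hF q)) := by
  refine fun p q hpq => Set.disjoint_left.2 fun z hp hq => hpq (Subtype.ext ?_)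
  rw [mem_WuLoc_iff, past_pieceRep] at hp hq
  rw [← hp, ← hq]

theorem pieceRep_mem_cylinder {l : ℕ} {a : Fin (l + 1) → Fin d}
    (hFa : ∀ i : Fin (l + 1), F (a 0) i = a i) {p : imagePasts x m} (hp : p.1 0 = a 0) :
    pieceRep F hF0 hF p ∈ cylinder a := fun i => by
  rw [pieceRep, ofPastFuture_val_natCast, hp, hFa]

end PieceRep

theorem exists_reroute (h01 : ∀ i j, A i j = 0 ∨ A i j = 1) (hM : ∀ i j, 0 < (A ^ M) i j)
    (hm : M ≤ m) (s : Fin d) :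
    ∃ g : imagePasts x m → imagePasts x m,
      ∀ p, (g p).1 0 = s ∧ ∀ n, M ≤ n → (g p).1 n = p.1 n := by
  choose Q hQ0 hQM hQ using fun t => Matrix.exists_path_of_pow_pos (B := A.transpose)
    (k := M) (s := s) (t := t) (by rw [← Matrix.transpose_pow]; exact hM t s)
  let g (p : ℕ → Fin d) := splice (Q (p M)) M fun n => p (n + M)
  have hQr (p : ℕ → Fin d) : Q (p M) M = p (0 + M) := by rw [hQM, zero_add]
  have hg (p : ℕ → Fin d) (n : ℕ) (hn : M ≤ n) : g p n = p n := by
    simp only [g, splice_of_le hn, Nat.sub_add_cancel hn]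
  have hg0 (p : ℕ → Fin d) : g p 0 = s := (splice_zero (hQr p)).trans (hQ0 _)
  refine ⟨fun p => ⟨g p.1, fun n => ?_, fun n hn => (hg p.1 n (by omega)).trans (p.2.2 n hn)⟩,
    fun p => ⟨hg0 p.1, hg p.1⟩⟩
  refine splice_chain (R := fun i j => A j i = 1)
    (fun i hi => (h01 _ _).resolve_left (hQ _ i hi).ne') (hQr p.1) (fun i => ?_) n
  simpa [Nat.add_right_comm i 1 M] using p.2.1 (i + M)

theorem card_imagePasts_le (h01 : ∀ i j, A i j = 0 ∨ A i j = 1) (hM : ∀ i j, 0 < (A ^ M) i j)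
    (hm : M ≤ m) (s : Fin d) :
    Nat.card (imagePasts x m) ≤ Nat.card {p : imagePasts x m // p.1 0 = s} * d ^ M := by
  obtain ⟨g, hg⟩ := exists_reroute h01 hM hm s
  have hinj : Function.Injective fun p : imagePasts x m =>
      ((⟨g p, (hg p).1⟩ : {p : imagePasts x m // p.1 0 = s}), fun j : Fin M => p.1 j) := by
    intro p q hpq
    simp only [Prod.mk.injEq, Subtype.mk.injEq] at hpq
    refine Subtype.ext (funext fun n => ?_)
    by_cases hn : n < M
    · exact congrFun hpq.2 ⟨n, hn⟩
    · rw [← (hg p).2 n (by omega), ← (hg q).2 n (by omega), hpq.1]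
  simpa [Nat.card_prod, Nat.card_fun] using Nat.card_le_card_of_injective _ hinj

theorem inv_mul_le_sum_indicator_pieceRep_div_sum (h01 : ∀ i j, A i j = 0 ∨ A i j = 1)
    (hM : ∀ i j, 0 < (A ^ M) i j) (hm : M ≤ m) {F : Fin d → ℕ → Fin d}
    (hF0 : ∀ s, F s 0 = s) (hF : ∀ s n, A (F s n) (F s (n + 1)) = 1)
    {l : ℕ} {a : Fin (l + 1) → Fin d} (hFa : ∀ i : Fin (l + 1), F (a 0) i = a i)
    {μ : SigmaA d A → ℝ} (hμ : ∀ z, 0 < μ z) {κ : ℝ} (hcomp : ∀ z w, μ z ≤ κ * μ w)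
    [Fintype (imagePasts x m)] :
    ((d : ℝ) ^ M * κ)⁻¹ ≤
      (∑ p : imagePasts x m, (cylinder a).indicator μ (pieceRep F hF0 hF p)) /
        ∑ p : imagePasts x m, μ (pieceRep F hF0 hF p) := by
  classical
  have : Nonempty (imagePasts x m) :=
    ⟨⟨_, mem_image_iterate_WuLoc_iff.1 ⟨x, mem_WuLoc_iff.2 rfl, rfl⟩⟩⟩
  have hcard : Fintype.card (imagePasts x m) ≤
      (Finset.univ.filter fun p : imagePasts x m => pieceRep F hF0 hF p ∈ cylinder a).card *
        d ^ M := by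
    refine (Nat.card_eq_fintype_card.symm.trans_le
      (card_imagePasts_le h01 hM hm (a 0))).trans ?_
    rw [Nat.card_eq_fintype_card, Fintype.card_subtype]
    gcongr with p _
    exact pieceRep_mem_cylinder F hF0 hF hFa
  simp only [Set.indicator_apply, ← Finset.sum_filter]
  exact_mod_cast inv_mul_le_sum_div_sum (fun p => hμ _) (fun p q => hcomp _ _) hcard

end SigmaA

theorem Theta_adapted_to_cylinder_general
    (d : ℕ) (A : Matrix (Fin d) (Fin d) ℕ) (M : ℕ)
    (h01 : ∀ i j, A i j = 0 ∨ A i j = 1)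
    (hM : ∀ i j, 0 < (A ^ M) i j)
    (hne : Nonempty (SigmaA d A))
    (ν : SigmaA d A → Measure (SigmaA d A))
    (hfin : ∀ z, IsFiniteMeasure (ν z))
    (hpos : ∀ z, 0 < (ν z) (WuLoc d A z))
    (κ : ℝ) (hκ : 1 ≤ κ)
    (hcomp : ∀ z w : SigmaA d A,
      ((ν z) (WuLoc d A z)).toReal ≤ κ * ((ν w) (WuLoc d A w)).toReal)
    (l : ℕ) (a : Fin (l + 1) → Fin d)
    (ha : ∀ i : Fin l, A (a i.castSucc) (a i.succ) = 1) :
    ∃ ε : ℝ, 0 < ε ∧ ∀ (m : ℕ), M < m → ∀ x : SigmaA d A,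
      ∃ (k : ℕ) (y : Fin k → SigmaA d A),
        ((shiftMap d A)^[m] '' WuLoc d A x = ⋃ i : Fin k, WuLoc d A (y i)) ∧
        (Pairwise fun i j : Fin k =>
          Disjoint (WuLoc d A (y i)) (WuLoc d A (y j))) ∧
        ε ≤ (∑ i : Fin k,
              Set.indicator {z : SigmaA d A | ∀ i' : Fin (l + 1), z.val (i' : ℤ) = a i'}
                (fun _ => ((ν (y i)) (WuLoc d A (y i))).toReal) (y i)) /
            (∑ i : Fin k, ((ν (y i)) (WuLoc d A (y i))).toReal) := by
  obtain ⟨x₀⟩ := hne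
  obtain ⟨F, hF0, hF, hFa⟩ := SigmaA.exists_future h01 hM x₀ a ha
  have hd : 0 < d := (x₀.val 0).pos
  refine ⟨((d : ℝ) ^ M * κ)⁻¹, by positivity, fun m hm x => ?_⟩
  have hμ (z : SigmaA d A) : 0 < ((ν z) (WuLoc d A z)).toReal :=
    ENNReal.toReal_pos (hpos z).ne' (measure_ne_top _ _)
  have := Fintype.ofFinite (x.imagePasts m)
  let e := (Fintype.equivFin (x.imagePasts m)).symm
  let y (p : x.imagePasts m) := SigmaA.pieceRep F hF0 hF p
  refine ⟨_, y ∘ e, ?_, fun i j hij => ?_, ?_⟩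
  · rw [SigmaA.image_iterate_WuLoc_eq_iUnion F hF0 hF]
    exact (e.surjective.iUnion_comp fun p => WuLoc d A (y p)).symm
  · exact SigmaA.pairwise_disjoint_WuLoc_pieceRep F hF0 hF (e.injective.ne hij)
  · have key := SigmaA.inv_mul_le_sum_indicator_pieceRep_div_sum (x := x) h01 hM hm.le
      hF0 hF hFa hμ hcomp
    rw [← e.sum_comp, ← e.sum_comp] at key
    exact key

/-- for a mixing matrix and uniformly comparable masses
`ν^u_z(W^u_loc(z))`, for every cylinder `U` the probability measures
`Θ^m_{n,x} = Σᵢ [ν^u_{σ^m x}(W^u_loc(yⁱ))/ν^u_{σ^m x}(σ^m W^u_loc(x))] δ_{yⁱ}`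
(whose weights equal `ν^u_{yⁱ}(W^u_loc(yⁱ))` normalized, by quasi-invariance) can be
chosen, uniformly in `m > M` and `x`, to give `U` mass at least some `ε > 0`:
the family is adapted to `U`. -/
theorem Theta_adapted_to_cylinder
    (d : ℕ) (A : Matrix (Fin d) (Fin d) ℕ) (M : ℕ)
    (h01 : ∀ i j, A i j = 0 ∨ A i j = 1)
    (hM : ∀ i j, 0 < (A ^ M) i j)
    (hcpt : CompactSpace (SigmaA d A)) (hne : Nonempty (SigmaA d A))
    (ν : SigmaA d A → Measure (SigmaA d A)) (φt : SigmaA d A → ℝ)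
    (hφt : Continuous φt)
    (hfin : ∀ z, IsFiniteMeasure (ν z))
    (hpos : ∀ z, 0 < (ν z) (WuLoc d A z))
    (hpast : ∀ z w, w ∈ WuLoc d A z → ∃ c : ℝ≥0∞, 0 < c ∧ c ≠ ⊤ ∧ ν z = c • ν w)
    (hquasi : ∀ z, Measure.map (shiftMap d A) (ν z) =
      ENNReal.ofReal (Real.exp (φt z)) • ν (shiftMap d A z))
    (κ : ℝ) (hκ : 1 ≤ κ)
    (hcomp : ∀ z w : SigmaA d A,
      ((ν z) (WuLoc d A z)).toReal ≤ κ * ((ν w) (WuLoc d A w)).toReal)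
    (l : ℕ) (a : Fin (l + 1) → Fin d)
    (ha : ∀ i : Fin l, A (a i.castSucc) (a i.succ) = 1) :
    ∃ ε : ℝ, 0 < ε ∧ ∀ (m : ℕ), M < m → ∀ x : SigmaA d A,
      ∃ (k : ℕ) (y : Fin k → SigmaA d A),
        ((shiftMap d A)^[m] '' WuLoc d A x = ⋃ i : Fin k, WuLoc d A (y i)) ∧
        (Pairwise fun i j : Fin k =>
          Disjoint (WuLoc d A (y i)) (WuLoc d A (y j))) ∧
        ε ≤ (∑ i : Fin k,
              Set.indicator {z : SigmaA d A | ∀ i' : Fin (l + 1), z.val (i' : ℤ) = a i'}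
                (fun _ => ((ν (y i)) (WuLoc d A (y i))).toReal) (y i)) /
            (∑ i : Fin k, ((ν (y i)) (WuLoc d A (y i))).toReal) :=
  Theta_adapted_to_cylinder_general d A M h01 hM hne ν hfin hpos κ hκ hcomp l a ha
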